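/- With the cyclic setup in the context (p jump points added into each of the intervals of C_k, both 𝒜 and 𝒜_S invariant under σ and σ⁻¹), for every n ∈ ℤ: Sepⁿ_{𝒜_S}(ℝ) = Sepⁿ_𝒜(ℝ) if k ∤ n, and Sepⁿ_{𝒜_S}(ℝ) = Sepⁿ_𝒜(ℝ) ∪ (⋃_{l=1, l ∤ (n/k)}^{p+1} C̃_{k·l}) if k ∣ n. Consequently the commutants satisfy 𝒜_S′ = 𝒜′ \ {Σ_{n∈ℤ} fₙδⁿ ∈ 𝒜′ : fₙ does not vanish identically on C̃_{k·l} for some n and some l with k ∣ n and l ∤ (n/k)}. -/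

import Mathlib

open scoped Classical

noncomputable section

namespace PaperTRS

/-- The algebra of complex valued functions constant on each set of the family `P`. -/
def partAlg {X J : Type*} (P : J → Set X) : Subalgebra ℂ (X → ℂ) where
  carrier := {h | ∀ i, ∀ x ∈ P i, ∀ y ∈ P i, h x = h y}
  mul_mem' := by
    intro a b ha hb i x hx y hy
    simp only [Pi.mul_apply, ha i x hx y hy, hb i x hx y hy]
  add_mem' := by
    intro a b ha hb i x hx y hy
    simp only [Pi.add_apply, ha i x hx y hy, hb i x hx y hy]
  algebraMap_mem' := by intro r i x hx y hy; rfl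

/-- Piecewise constant functions on `ℝ` whose jumps all lie in the set `T`. -/
def pcAlgOn (T : Set ℝ) : Subalgebra ℂ (ℝ → ℂ) where
  carrier := {h | ∀ x y : ℝ, x ∉ T → y ∉ T →
    (∀ u ∈ T, u ∉ Set.Icc (min x y) (max x y)) → h x = h y}
  mul_mem' := by
    intro a b ha hb x y hx hy hxy
    simp only [Pi.mul_apply, ha x y hx hy hxy, hb x y hx hy hxy]
  add_mem' := by
    intro a b ha hb x y hx hy hxy
    simp only [Pi.add_apply, ha x y hx hy hxy, hb x y hx hy hxy]
  algebraMap_mem' := by intro r x y _ _ _; rfl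

/-- Invariance of an algebra of functions under a self-map of `X`. -/
def AlgInvariant {X : Type*} (A : Subalgebra ℂ (X → ℂ)) (σ : X → X) : Prop :=
  ∀ h ∈ A, (h ∘ σ) ∈ A

/-- `Sep A σ n = {x | ∃ h ∈ A, h x ≠ σ̃ⁿ(h) x}`, where `σ̃ⁿ(h) = h ∘ σ⁻ⁿ`. -/
def Sep {X : Type*} (A : Subalgebra ℂ (X → ℂ)) (σ : Equiv.Perm X) (n : ℤ) : Set X :=
  {x | ∃ h ∈ A, h x ≠ h ((σ ^ n)⁻¹ x)}

/-- Twisted convolution product on the crossed product `⋊ ℤ`: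
`(fₙ δⁿ) * (gₘ δᵐ) = fₙ · σ̃ⁿ(gₘ) · δ^{n+m}` extended bilinearly. -/
def cmul {X : Type*} (σ : Equiv.Perm X) (f g : ℤ →₀ (X → ℂ)) : ℤ →₀ (X → ℂ) :=
  f.sum fun n a => g.sum fun m b =>
    Finsupp.single (n + m) (fun x => a x * b ((σ ^ n)⁻¹ x))

/-- Membership of an element `Σ fₙ δⁿ` in the crossed product of the algebra `B` with `ℤ`. -/
def InCrossed {X : Type*} (B : Subalgebra ℂ (X → ℂ)) (f : ℤ →₀ (X → ℂ)) : Prop :=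
  ∀ n, f n ∈ B

/-- The commutant of `A` inside the crossed product `B ⋊ ℤ` (where `A ⊆ B`). -/
def commutant {X : Type*} (A B : Subalgebra ℂ (X → ℂ)) (σ : Equiv.Perm X) :
    Set (ℤ →₀ (X → ℂ)) :=
  {f | InCrossed B f ∧
    ∀ a ∈ A, cmul σ f (Finsupp.single 0 a) = cmul σ (Finsupp.single 0 a) f}

/-- The jump points `t₁ < ⋯ < t_N` extended by `t₀ = -∞` and `t_{N+1} = +∞`. -/
def tE (N : ℕ) (t : Fin N → ℝ) (i : ℕ) : EReal :=
  if h : 1 ≤ i ∧ i ≤ N then ((t ⟨i - 1, by omega⟩ : ℝ) : EReal)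
  else if i = 0 then ⊥ else ⊤

/-- The open interval `I_i = (t_i, t_{i+1})` for `0 ≤ i ≤ N`. -/
def openPiece (N : ℕ) (t : Fin N → ℝ) (i : ℕ) : Set ℝ :=
  {x : ℝ | tE N t i < (x : EReal) ∧ (x : EReal) < tE N t (i + 1)}

/-- The sets of the partition of `ℝ` determined by the jump points: the open
intervals `I_0, …, I_N` together with the singletons `{t_i}`. -/
def pieces (N : ℕ) (t : Fin N → ℝ) : Set (Set ℝ) :=
  {P | (∃ i : ℕ, i ≤ N ∧ P = openPiece N t i) ∨ (∃ i : Fin N, P = {t i})}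

/-- `C_k`: points `x` such that `k` is the smallest positive integer with `x` and
`σᵏ(x)` in one common set of the partition. -/
def Ck (N : ℕ) (t : Fin N → ℝ) (σ : Equiv.Perm ℝ) (k : ℕ) : Set ℝ :=
  {x | IsLeast {j : ℕ | 0 < j ∧ ∃ P ∈ pieces N t, x ∈ P ∧ (σ ^ j) x ∈ P} k}

end PaperTRS
namespace PaperTRS

/-- With `p` points `s i 0 < ⋯ < s i (p-1)` added in the interval `I_{α i}`, the `j`-th
open subinterval of the refined partition of `I_{α i}`, for `j = 0, …, p`. -/
def subPiece (N : ℕ) (t : Fin N → ℝ) {k p : ℕ} (α : Fin k → ℕ)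
    (s : Fin k → Fin p → ℝ) (i : Fin k) (j : Fin (p + 1)) : Set ℝ :=
  {x : ℝ |
    (if hj : (j : ℕ) = 0 then tE N t (α i)
      else ((s i ⟨(j : ℕ) - 1, by have := j.isLt; omega⟩ : ℝ) : EReal)) < (x : EReal) ∧
    (x : EReal) <
      (if hj : (j : ℕ) = p then tE N t (α i + 1)
        else ((s i ⟨(j : ℕ), by have := j.isLt; omega⟩ : ℝ) : EReal))}

/-- The sets of the refined partition of the union of the intervals `I_{α i}`: the open
subintervals determined by the added jump points together with the singleton jump points. -/
def cyclePieces (N : ℕ) (t : Fin N → ℝ) {k p : ℕ} (α : Fin k → ℕ)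
    (s : Fin k → Fin p → ℝ) : Set (Set ℝ) :=
  {P | (∃ i j, P = subPiece N t α s i j) ∨ (∃ i j, P = ({s i j} : Set ℝ))}

/-- `C̃_r`: points `x` of `⋃ᵢ I_{α i}` such that `r` is the smallest positive integer with
`x` and `σʳ(x)` in one common set of the refined partition. -/
def Ctil (N : ℕ) (t : Fin N → ℝ) (σ : Equiv.Perm ℝ) {k p : ℕ} (α : Fin k → ℕ)
    (s : Fin k → Fin p → ℝ) (r : ℕ) : Set ℝ :=
  {x | x ∈ ⋃ i, openPiece N t (α i) ∧
    IsLeast {j : ℕ | 0 < j ∧ ∃ P ∈ cyclePieces N t α s, x ∈ P ∧ (σ ^ j) x ∈ P} r}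

/-- The cyclic setup: `k` pairwise distinct open intervals `I_{α 0}, …, I_{α (k-1)}` of the
original partition, contained in `C_k` and permuted cyclically by `σ`, with `p` jump points
`s i 0 < ⋯ < s i (p-1)` added into each of them, and both the original algebra `𝒜` and the
refined algebra `𝒜_S` invariant under `σ` and `σ⁻¹`. -/
def CyclicSetup (N : ℕ) (t : Fin N → ℝ) (σ : Equiv.Perm ℝ) {k p : ℕ} (α : Fin k → ℕ)
    (s : Fin k → Fin p → ℝ) : Prop :=
  0 < k ∧ (∀ i, α i ≤ N) ∧ Function.Injective α ∧
  (∀ i j, s i j ∈ openPiece N t (α i)) ∧ (∀ i, StrictMono (s i)) ∧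
  (∀ i : Fin k, ∃ i' : Fin k, ((i' : ℕ) = ((i : ℕ) + 1) % k) ∧
    σ '' openPiece N t (α i) = openPiece N t (α i')) ∧
  (∀ i, openPiece N t (α i) ⊆ Ck N t σ k) ∧
  AlgInvariant (pcAlgOn (Set.range t)) σ ∧
  AlgInvariant (pcAlgOn (Set.range t)) σ.symm ∧
  AlgInvariant (pcAlgOn (Set.range t ∪ ⋃ i, Set.range (s i))) σ ∧
  AlgInvariant (pcAlgOn (Set.range t ∪ ⋃ i, Set.range (s i))) σ.symm

/-- `C_k` for the partition `P` of a general set `X`. -/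
def CkGen {X ι : Type*} (P : ι → Set X) (σ : Equiv.Perm X) (k : ℕ) : Set X :=
  {x | IsLeast {j : ℕ | 0 < j ∧ ∃ i, x ∈ P i ∧ (σ ^ j) x ∈ P i} k}

/-- `C̃_r` relative to a family `Q` of refined pieces inside the subset `base` of `X`. -/
def CtilGen {X ι : Type*} (σ : Equiv.Perm X) (Q : ι → Set X) (base : Set X) (r : ℕ) :
    Set X :=
  {x | x ∈ base ∧ IsLeast {j : ℕ | 0 < j ∧ ∃ i, x ∈ Q i ∧ (σ ^ j) x ∈ Q i} r}

/-- `C_∞`: points that never return to the partition set they lie in. -/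
def Cinf {X ι : Type*} (P : ι → Set X) (σ : Equiv.Perm X) : Set X :=
  {x | ∀ k : ℕ, 0 < k → ¬∃ i, x ∈ P i ∧ (σ ^ k) x ∈ P i}

end PaperTRS

/-!
Both algebras consist of the functions that are constant on the cells of a partition of `ℝ`, so
`x ∈ Sepⁿ` exactly when `σ⁻ⁿ x` leaves the cell of `x`. Since `σ` permutes the cells, the
exponents `n` with `σⁿ x` in the cell of `x` form a subgroup of `ℤ`, generated by the least
positive return. For `x ∈ I_{αᵢ}` and the original partition this generator is `k`, because
`I_{αᵢ} ⊆ C_k`. The refinement separates new pairs only inside the intervals `I_{αᵢ}`, and there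
`σᵏ` permutes the `p + 1` open subintervals and (separately) the `p` new points of `I_{αᵢ}`, so by
pigeonhole the least refined return of `x` is `k·l` with `1 ≤ l ≤ p + 1`: then `x ∈ C̃_{k·l}` and
`x ∈ Sepⁿ_{𝒜_S}` iff `k·l ∤ n`. The commutants follow because `Σ fₙδⁿ` commutes with an algebra
`𝒜` iff every `fₙ` vanishes on `Sepⁿ_𝒜`.
-/

theorem Finsupp.sum_single_apply {ι M N : Type*} [DecidableEq ι] [Zero M] [AddCommMonoid N]
    (f : ι →₀ M) {g : ι → M → N} (hg : ∀ i, g i 0 = 0) (i : ι) :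
    (f.sum fun j b => Finsupp.single j (g j b)) i = g i (f i) := by
  rw [Finsupp.sum_apply]
  simp_rw [Finsupp.single_apply]
  rw [Finsupp.sum_ite_eq']
  split_ifs with h
  · rfl
  · rw [Finsupp.notMem_support_iff.1 h, hg]

namespace PaperTRS

-- `x` and `y` lie in one set of the partition of `ℝ` determined by the jump points `W`.
def SameCell (W : Set ℝ) (x y : ℝ) : Prop :=
  x = y ∨ Disjoint (Set.uIcc x y) W

lemma exists_mem_uIcc_coe_eq {x y : ℝ} {a : EReal} (h₁ : (x : EReal) ≤ a)
    (h₂ : a ≤ y) : ∃ r ∈ Set.uIcc x y, (r : EReal) = a := by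
  induction a with
  | bot => exact absurd h₁ (by simp)
  | coe r => exact ⟨r, Set.mem_uIcc.2 (Or.inl ⟨by exact_mod_cast h₁, by exact_mod_cast h₂⟩), rfl⟩
  | top => exact absurd h₂ (by simp)

namespace SameCell

variable {W W' : Set ℝ} {x y z : ℝ}

protected lemma refl (W : Set ℝ) (x : ℝ) : SameCell W x x := Or.inl rfl

protected lemma symm (h : SameCell W x y) : SameCell W y x :=
  h.imp Eq.symm fun h => Set.uIcc_comm x y ▸ h

protected lemma trans (h₁ : SameCell W x y) (h₂ : SameCell W y z) : SameCell W x z := by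
  rcases h₁ with rfl | h₁
  · exact h₂
  rcases h₂ with rfl | h₂
  · exact Or.inr h₁
  exact Or.inr ((h₁.union_left h₂).mono_left Set.uIcc_subset_uIcc_union_uIcc)

lemma mono (hW : W' ⊆ W) (h : SameCell W x y) : SameCell W' x y :=
  h.imp id fun h => h.mono_right hW

lemma eq_of_mem (hx : x ∈ W) (h : SameCell W x y) : y = x :=
  h.elim Eq.symm fun h => absurd hx (Set.disjoint_left.1 h Set.left_mem_uIcc)

lemma mem_preimage_Ioo {a b : EReal} (ha : ∀ r : ℝ, (r : EReal) = a → r ∈ W)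
    (hb : ∀ r : ℝ, (r : EReal) = b → r ∈ W) (h : SameCell W x y)
    (hx : (x : EReal) ∈ Set.Ioo a b) : (y : EReal) ∈ Set.Ioo a b := by
  rcases h with rfl | h
  · exact hx
  by_contra hy
  rcases not_and_or.1 hy with hy | hy
  · obtain ⟨r, hr, rfl⟩ := exists_mem_uIcc_coe_eq (not_lt.1 hy) hx.1.le
    exact Set.disjoint_left.1 h (Set.uIcc_comm y x ▸ hr) (ha r rfl)
  · obtain ⟨r, hr, rfl⟩ := exists_mem_uIcc_coe_eq hx.2.le (not_lt.1 hy)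
    exact Set.disjoint_left.1 h hr (hb r rfl)

end SameCell

section Cells

variable {W : Set ℝ} {x y : ℝ}

lemma sameCell_equivalence (W : Set ℝ) : Equivalence (SameCell W) :=
  ⟨SameCell.refl W, SameCell.symm, SameCell.trans⟩

lemma sameCell_of_ordConnected {S : Set ℝ} (hS : S.OrdConnected) (hSW : Disjoint S W)
    (hx : x ∈ S) (hy : y ∈ S) : SameCell W x y :=
  Or.inr (hSW.mono_left (hS.uIcc_subset hx hy))

lemma exists_sameCell_ne (hW : W.Finite) (hx : x ∉ W) :
    ∃ y ≠ x, SameCell W x y := by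
  obtain ⟨l, u, ⟨hl, hu⟩, hsub⟩ :=
    mem_nhds_iff_exists_Ioo_subset.1 (hW.isClosed.isOpen_compl.mem_nhds hx)
  refine ⟨(x + u) / 2, by linarith, Or.inr (Set.subset_compl_iff_disjoint_right.1 ?_)⟩
  rw [Set.uIcc_of_le (by linarith)]
  exact (Set.Icc_subset_Ioo hl (by linarith)).trans hsub

lemma mem_iff_forall_sameCell (hW : W.Finite) :
    x ∈ W ↔ ∀ y, SameCell W x y → y = x := by
  refine ⟨fun hx y h => h.eq_of_mem hx, fun h => ?_⟩
  by_contra hx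
  obtain ⟨y, hne, hy⟩ := exists_sameCell_ne hW hx
  exact hne (h y hy)

lemma mem_pcAlgOn_iff {h : ℝ → ℂ} :
    h ∈ pcAlgOn W ↔ ∀ x y, SameCell W x y → h x = h y := by
  refine ⟨fun hh x y hxy => ?_, fun hh x y hx hy hxy => hh x y (Or.inr ?_)⟩
  · rcases hxy with rfl | hxy
    · rfl
    exact hh x y (Set.disjoint_left.1 hxy Set.left_mem_uIcc)
      (Set.disjoint_left.1 hxy Set.right_mem_uIcc) fun u hu huxy => Set.disjoint_left.1 hxy huxy hu
  · exact Set.disjoint_left.2 fun u huxy hu => hxy u hu huxy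

lemma exists_mem_pcAlgOn_ne (hxy : ¬SameCell W x y) :
    ∃ h ∈ pcAlgOn W, h x ≠ h y := by
  refine ⟨fun z => if SameCell W x z then 1 else 0, mem_pcAlgOn_iff.2 fun a b hab => ?_, ?_⟩
  · have : SameCell W x a ↔ SameCell W x b := ⟨(·.trans hab), (·.trans hab.symm)⟩
    simp only [this]
  · simp [SameCell.refl, hxy]

lemma mem_sep_pcAlgOn_iff {σ : Equiv.Perm ℝ} {n : ℤ} :
    x ∈ Sep (pcAlgOn W) σ n ↔ ¬SameCell W x ((σ ^ (-n)) x) := by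
  rw [zpow_neg]
  exact ⟨fun ⟨h, hh, hne⟩ hx => hne (mem_pcAlgOn_iff.1 hh _ _ hx), exists_mem_pcAlgOn_ne⟩

end Cells

def relStabilizer {X : Type*} (r : X → X → Prop) : Subgroup (Equiv.Perm X) where
  carrier := {τ | ∀ x y, r (τ x) (τ y) ↔ r x y}
  mul_mem' h₁ h₂ x y := (h₁ _ _).trans (h₂ x y)
  one_mem' _ _ := Iff.rfl
  inv_mem' {τ} h x y := by simpa using (h (τ⁻¹ x) (τ⁻¹ y)).symm

section Returns

variable {X : Type*} {r : X → X → Prop} {σ : Equiv.Perm X}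

def returnSubgroup (hr : Equivalence r) (hσ : σ ∈ relStabilizer r) (x : X) :
    AddSubgroup ℤ where
  carrier := {n | r x ((σ ^ n) x)}
  zero_mem' := by simpa using hr.refl x
  add_mem' {a b} ha hb := by
    have hb' := ((relStabilizer r).zpow_mem hσ a x ((σ ^ b) x)).2 hb
    rw [← Equiv.Perm.mul_apply, ← zpow_add] at hb'
    exact hr.trans ha hb'
  neg_mem' {a} ha := by
    have ha' := ((relStabilizer r).zpow_mem hσ (-a) x ((σ ^ a) x)).2 ha
    rw [← Equiv.Perm.mul_apply, ← zpow_add, neg_add_cancel, zpow_zero,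
      Equiv.Perm.one_apply] at ha'
    exact hr.symm ha'

lemma mem_returnSubgroup {hr : Equivalence r} {hσ : σ ∈ relStabilizer r} {x : X} {n : ℤ} :
    n ∈ returnSubgroup hr hσ x ↔ r x ((σ ^ n) x) := Iff.rfl

lemma mem_iff_dvd_of_isLeast {H : AddSubgroup ℤ} {d : ℕ}
    (hd : IsLeast {j : ℕ | 0 < j ∧ (j : ℤ) ∈ H} d) (n : ℤ) : n ∈ H ↔ (d : ℤ) ∣ n := by
  obtain ⟨⟨hd0, hdH⟩, hmin⟩ := hd
  refine ⟨fun hn => ?_, fun ⟨c, hc⟩ => ?_⟩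
  · have hmod : n % d ∈ H := by
      rw [Int.emod_def, mul_comm, ← smul_eq_mul]
      exact H.sub_mem hn (H.zsmul_mem hdH _)
    have hlt := Int.emod_lt_of_pos n (Int.natCast_pos.2 hd0)
    by_contra hnd
    have hpos : 0 < n % d := (Int.emod_nonneg n (by omega)).lt_of_ne'
      fun h => hnd (Int.dvd_of_emod_eq_zero h)
    have := hmin (show (n % d).toNat ∈ _ from
      ⟨by omega, by rwa [Int.toNat_of_nonneg hpos.le]⟩)
    omega
  · rw [hc, mul_comm, ← smul_eq_mul]
    exact H.zsmul_mem hdH c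

lemma rel_zpow_iff_dvd (hr : Equivalence r) (hσ : σ ∈ relStabilizer r) {x : X} {d : ℕ}
    (hd : IsLeast {j : ℕ | 0 < j ∧ r x ((σ ^ j) x)} d) (n : ℤ) :
    r x ((σ ^ n) x) ↔ (d : ℤ) ∣ n :=
  mem_iff_dvd_of_isLeast (H := returnSubgroup hr hσ x)
    (by simpa only [mem_returnSubgroup, zpow_natCast] using hd) n

end Returns

lemma exists_lt_rel_of_forall_mem_clique {X ι : Type*} [Fintype ι] {r : X → X → Prop}
    (hr : ∀ x y, r x y → r y x) {P : ι → Set X} (hP : ∀ i, ∀ x ∈ P i, ∀ y ∈ P i, r x y) {f : ℕ → X}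
    (hf : ∀ c ≤ Fintype.card ι, ∃ i, f c ∈ P i) :
    ∃ a b, a < b ∧ b ≤ Fintype.card ι ∧ r (f a) (f b) := by
  choose g hg using fun c : Fin (Fintype.card ι + 1) => hf c (Nat.lt_succ_iff.1 c.2)
  obtain ⟨a, b, hab, hgab⟩ := Fintype.exists_ne_map_eq_of_card_lt g (by simp)
  have hrab := hP _ _ (hg a) _ (hgab ▸ hg b)
  rcases lt_or_gt_of_ne (Fin.val_ne_of_ne hab) with h | h
  · exact ⟨a, b, h, Nat.lt_succ_iff.1 b.2, hrab⟩
  · exact ⟨b, a, h, Nat.lt_succ_iff.1 a.2, hr _ _ hrab⟩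

section Invariance

variable {W : Set ℝ} {x y : ℝ}

lemma SameCell.map_of_algInvariant {f : ℝ → ℝ} (hf : AlgInvariant (pcAlgOn W) f)
    (h : SameCell W x y) : SameCell W (f x) (f y) := by
  by_contra hne
  obtain ⟨g, hg, hgne⟩ := exists_mem_pcAlgOn_ne hne
  exact hgne (mem_pcAlgOn_iff.1 (hf g hg) x y h)

lemma mem_relStabilizer_of_algInvariant {σ : Equiv.Perm ℝ}
    (hσ : AlgInvariant (pcAlgOn W) σ) (hσ' : AlgInvariant (pcAlgOn W) σ.symm) :
    σ ∈ relStabilizer (SameCell W) := fun x y =>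
  ⟨fun h => by simpa using h.map_of_algInvariant hσ', fun h => h.map_of_algInvariant hσ⟩

lemma mem_of_apply_mem_of_mem_relStabilizer (hW : W.Finite) {τ : Equiv.Perm ℝ}
    (hτ : τ ∈ relStabilizer (SameCell W)) (hx : τ x ∈ W) : x ∈ W := by
  rw [mem_iff_forall_sameCell hW] at hx ⊢
  exact fun y hy => τ.injective (hx _ ((hτ x y).2 hy))

lemma apply_mem_iff_of_mem_relStabilizer (hW : W.Finite) {τ : Equiv.Perm ℝ}
    (hτ : τ ∈ relStabilizer (SameCell W)) : τ x ∈ W ↔ x ∈ W :=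
  ⟨mem_of_apply_mem_of_mem_relStabilizer hW hτ, fun hx =>
    mem_of_apply_mem_of_mem_relStabilizer hW ((relStabilizer _).inv_mem hτ) (by simpa using hx)⟩

end Invariance

section Partition

variable {N : ℕ} {t : Fin N → ℝ} {x y : ℝ}

lemma tE_mono (ht : Monotone t) : Monotone (tE N t) := by
  intro i j hij
  unfold tE
  split_ifs <;> first
    | exact bot_le | exact le_top | omega
    | exact EReal.coe_le_coe_iff.2 (ht (Fin.mk_le_mk.2 (by omega)))

lemma mem_range_of_coe_eq_tE {i : ℕ} {r : ℝ} (h : (r : EReal) = tE N t i) : r ∈ Set.range t := by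
  unfold tE at h
  split_ifs at h
  · exact ⟨_, (EReal.coe_injective h).symm⟩
  · exact absurd h (EReal.coe_ne_bot r)
  · exact absurd h (EReal.coe_ne_top r)

lemma openPiece_ordConnected (i : ℕ) : (openPiece N t i).OrdConnected :=
  Set.ordConnected_Ioo.preimage_mono EReal.coe_strictMono.monotone

lemma disjoint_openPiece (ht : StrictMono t) {i j : ℕ} (hij : i ≠ j) :
    Disjoint (openPiece N t i) (openPiece N t j) := by
  refine Set.disjoint_left.2 fun x hi hj => ?_
  rcases hij.lt_or_gt with h | h
  · exact lt_irrefl _ ((hi.2.trans_le (tE_mono ht.monotone h)).trans hj.1)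
  · exact lt_irrefl _ ((hj.2.trans_le (tE_mono ht.monotone h)).trans hi.1)

lemma disjoint_openPiece_range (ht : StrictMono t) (i : ℕ) :
    Disjoint (openPiece N t i) (Set.range t) := by
  refine Set.disjoint_right.2 ?_
  rintro _ ⟨j, rfl⟩ ⟨h₁, h₂⟩
  have hj : tE N t (j + 1) = t j := by simp [tE]
  rcases le_or_gt ((j : ℕ) + 1) i with h | h
  · exact lt_irrefl _ ((hj ▸ tE_mono ht.monotone h).trans_lt h₁)
  · exact lt_irrefl _ (h₂.trans_le (hj ▸ tE_mono ht.monotone h))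

lemma eq_of_mem_openPiece (ht : StrictMono t) {k : ℕ} {α : Fin k → ℕ} (hα : Function.Injective α)
    {i i' : Fin k} (hx : x ∈ openPiece N t (α i)) (hx' : x ∈ openPiece N t (α i')) : i = i' := by
  by_contra h
  exact Set.disjoint_left.1 (disjoint_openPiece ht (hα.ne h)) hx hx'

lemma sameCell_range_iff (ht : StrictMono t) {i : ℕ} (hx : x ∈ openPiece N t i) :
    SameCell (Set.range t) x y ↔ y ∈ openPiece N t i :=
  ⟨fun h => h.mem_preimage_Ioo (fun _ => mem_range_of_coe_eq_tE)
      (fun _ => mem_range_of_coe_eq_tE) hx,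
    sameCell_of_ordConnected (openPiece_ordConnected i) (disjoint_openPiece_range ht i) hx⟩

lemma exists_mem_pieces_iff (ht : StrictMono t) {i : ℕ} (hi : i ≤ N)
    (hx : x ∈ openPiece N t i) :
    (∃ P ∈ pieces N t, x ∈ P ∧ y ∈ P) ↔ y ∈ openPiece N t i := by
  refine ⟨?_, fun hy => ⟨_, Or.inl ⟨i, hi, rfl⟩, hx, hy⟩⟩
  rintro ⟨P, ⟨i', -, rfl⟩ | ⟨j, rfl⟩, hxP, hyP⟩
  · obtain rfl : i' = i := by
      by_contra h
      exact Set.disjoint_left.1 (disjoint_openPiece ht h) hxP hx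
    exact hyP
  · exact absurd ⟨j, hxP.symm⟩ (Set.disjoint_left.1 (disjoint_openPiece_range ht i) hx)

end Partition

section Refinement

variable {N : ℕ} {t : Fin N → ℝ} {k p : ℕ} {α : Fin k → ℕ} {s : Fin k → Fin p → ℝ} {x y : ℝ}

lemma subPiece_ordConnected (i : Fin k) (j : Fin (p + 1)) :
    (subPiece N t α s i j).OrdConnected :=
  Set.ordConnected_Ioo.preimage_mono EReal.coe_strictMono.monotone

lemma SameCell.mem_subPiece {i : Fin k} {j : Fin (p + 1)}
    (h : SameCell (Set.range t ∪ ⋃ i, Set.range (s i)) x y)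
    (hx : x ∈ subPiece N t α s i j) : y ∈ subPiece N t α s i j := by
  refine h.mem_preimage_Ioo ?_ ?_ hx <;> intro r hr <;> split_ifs at hr <;> first
    | exact Or.inl (mem_range_of_coe_eq_tE hr)
    | exact Or.inr (Set.mem_iUnion.2 ⟨i, _, (EReal.coe_injective hr).symm⟩)

lemma subPiece_subset (hs : ∀ i j, s i j ∈ openPiece N t (α i)) (i : Fin k) (j : Fin (p + 1)) :
    subPiece N t α s i j ⊆ openPiece N t (α i) := by
  rintro x ⟨h₁, h₂⟩
  constructor
  · split_ifs at h₁
    exacts [h₁, (hs i _).1.trans h₁]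
  · split_ifs at h₂
    exacts [h₂, h₂.trans (hs i _).2]

lemma notMem_subPiece {i : Fin k} (hs : StrictMono (s i)) (j : Fin (p + 1)) (j' : Fin p) :
    s i j' ∉ subPiece N t α s i j := by
  rintro ⟨h₁, h₂⟩
  have hjj' : (j : ℕ) ≤ j' := by
    split_ifs at h₁ with h
    · omega
    · have : (j : ℕ) - 1 < j' := hs.lt_iff_lt.1 (EReal.coe_lt_coe_iff.1 h₁)
      omega
  have hj'j : (j' : ℕ) < j := by
    split_ifs at h₂ with h
    · omega
    · exact hs.lt_iff_lt.1 (EReal.coe_lt_coe_iff.1 h₂)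
  omega

lemma disjoint_subPiece (ht : StrictMono t) (hα : Function.Injective α)
    (hs : ∀ i j, s i j ∈ openPiece N t (α i)) (hs_mono : ∀ i, StrictMono (s i))
    (i : Fin k) (j : Fin (p + 1)) :
    Disjoint (subPiece N t α s i j) (Set.range t ∪ ⋃ i, Set.range (s i)) := by
  refine Set.disjoint_union_right.2
    ⟨(disjoint_openPiece_range ht _).mono_left (subPiece_subset hs i j), ?_⟩
  refine Set.disjoint_iUnion_right.2 fun i' => Set.disjoint_right.2 ?_
  rintro _ ⟨j', rfl⟩ hmem
  obtain rfl : i' = i := eq_of_mem_openPiece ht hα (hs i' j') (subPiece_subset hs i j hmem)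
  exact notMem_subPiece (hs_mono i') j j' hmem

lemma exists_mem_subPiece (hs_mono : ∀ i, StrictMono (s i)) {i : Fin k}
    (hx : x ∈ openPiece N t (α i)) (hxs : x ∉ Set.range (s i)) :
    ∃ j, x ∈ subPiece N t α s i j := by
  classical
  have hex : ∃ m : ℕ, ∀ j : Fin p, m ≤ j → x < s i j := ⟨p, fun j hj => absurd j.2 (by omega)⟩
  have hm : Nat.find hex ≤ p := Nat.find_min' hex fun j hj => absurd j.2 (by omega)
  refine ⟨⟨Nat.find hex, by omega⟩, ?_, ?_⟩
  · dsimp only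
    split_ifs with h
    · exact hx.1
    · have hmin := Nat.find_min hex (by omega : Nat.find hex - 1 < Nat.find hex)
      push Not at hmin
      obtain ⟨j, hj, hjx⟩ := hmin
      refine EReal.coe_lt_coe_iff.2 (((hs_mono i).monotone (b := j) hj).trans_lt ?_)
      exact hjx.lt_of_ne fun h => hxs ⟨j, h⟩
  · dsimp only
    split_ifs with h
    · exact hx.2
    · exact EReal.coe_lt_coe_iff.2 (Nat.find_spec hex _ le_rfl)

lemma mem_range_of_mem_openPiece (ht : StrictMono t) (hα : Function.Injective α)
    (hs : ∀ i j, s i j ∈ openPiece N t (α i)) {i : Fin k} (hx : x ∈ openPiece N t (α i))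
    (hxU : x ∈ Set.range t ∪ ⋃ i, Set.range (s i)) : x ∈ Set.range (s i) := by
  rcases hxU with hxt | hxs
  · exact absurd hxt (Set.disjoint_left.1 (disjoint_openPiece_range ht _) hx)
  · obtain ⟨i', j, rfl⟩ := Set.mem_iUnion.1 hxs
    obtain rfl := eq_of_mem_openPiece ht hα (hs i' j) hx
    exact ⟨j, rfl⟩

lemma exists_mem_cyclePieces_iff (ht : StrictMono t) (hα : Function.Injective α)
    (hs : ∀ i j, s i j ∈ openPiece N t (α i)) (hs_mono : ∀ i, StrictMono (s i)) {i : Fin k}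
    (hx : x ∈ openPiece N t (α i)) :
    (∃ P ∈ cyclePieces N t α s, x ∈ P ∧ y ∈ P) ↔
      SameCell (Set.range t ∪ ⋃ i, Set.range (s i)) x y := by
  constructor
  · rintro ⟨P, ⟨i', j, rfl⟩ | ⟨i', j, rfl⟩, hxP, hyP⟩
    · exact sameCell_of_ordConnected (subPiece_ordConnected i' j)
        (disjoint_subPiece ht hα hs hs_mono i' j) hxP hyP
    · exact Or.inl (hxP.trans hyP.symm)
  · intro h
    by_cases hxU : x ∈ Set.range t ∪ ⋃ i, Set.range (s i)
    · obtain ⟨j, rfl⟩ := mem_range_of_mem_openPiece ht hα hs hx hxU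
      exact ⟨_, Or.inr ⟨i, j, rfl⟩, rfl, h.eq_of_mem hxU⟩
    · obtain ⟨j, hj⟩ := exists_mem_subPiece hs_mono hx
        fun h => hxU (Or.inr (Set.mem_iUnion.2 ⟨i, h⟩))
      exact ⟨_, Or.inl ⟨i, j, rfl⟩, hj, h.mem_subPiece hj⟩

end Refinement

section Cycle

variable {N : ℕ} {t : Fin N → ℝ} {σ : Equiv.Perm ℝ} {k p : ℕ} {α : Fin k → ℕ}
  {s : Fin k → Fin p → ℝ} {x : ℝ} {i : Fin k}

lemma zpow_mem_openPiece_iff (ht : StrictMono t) (hαN : ∀ i, α i ≤ N)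
    (hCk : ∀ i, openPiece N t (α i) ⊆ Ck N t σ k)
    (hinv : AlgInvariant (pcAlgOn (Set.range t)) σ)
    (hinv' : AlgInvariant (pcAlgOn (Set.range t)) σ.symm)
    (hx : x ∈ openPiece N t (α i)) (n : ℤ) :
    (σ ^ n) x ∈ openPiece N t (α i) ↔ (k : ℤ) ∣ n := by
  have hk : IsLeast {j : ℕ | 0 < j ∧ SameCell (Set.range t) x ((σ ^ j) x)} k := by
    simpa only [Ck, Set.mem_ofPred_eq, sameCell_range_iff ht hx,
      exists_mem_pieces_iff ht (hαN i) hx] using hCk i hx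
  rw [← sameCell_range_iff ht hx]
  exact rel_zpow_iff_dvd (sameCell_equivalence _)
    (mem_relStabilizer_of_algInvariant hinv hinv') hk n

lemma exists_sameCell_pow_mul (ht : StrictMono t) (hαN : ∀ i, α i ≤ N)
    (hα : Function.Injective α) (hs : ∀ i j, s i j ∈ openPiece N t (α i))
    (hs_mono : ∀ i, StrictMono (s i)) (hCk : ∀ i, openPiece N t (α i) ⊆ Ck N t σ k)
    (hinvT : AlgInvariant (pcAlgOn (Set.range t)) σ)
    (hinvT' : AlgInvariant (pcAlgOn (Set.range t)) σ.symm)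
    (hinvU : AlgInvariant (pcAlgOn (Set.range t ∪ ⋃ i, Set.range (s i))) σ)
    (hinvU' : AlgInvariant (pcAlgOn (Set.range t ∪ ⋃ i, Set.range (s i))) σ.symm)
    (hx : x ∈ openPiece N t (α i)) :
    ∃ c, 0 < c ∧ c ≤ p + 1 ∧
      SameCell (Set.range t ∪ ⋃ i, Set.range (s i)) x ((σ ^ (k * c)) x) := by
  set U := Set.range t ∪ ⋃ i, Set.range (s i)
  have hσ := mem_relStabilizer_of_algInvariant hinvU hinvU'
  have hI : ∀ c, (σ ^ (k * c)) x ∈ openPiece N t (α i) := fun c => by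
    simpa only [zpow_natCast] using (zpow_mem_openPiece_iff ht hαN hCk hinvT hinvT' hx
      ((k * c : ℕ) : ℤ)).2 (by simp)
  have hU : ∀ c, (σ ^ (k * c)) x ∈ U ↔ x ∈ U := fun c =>
    apply_mem_iff_of_mem_relStabilizer
      ((Set.finite_range t).union (Set.finite_iUnion fun i => Set.finite_range (s i)))
      ((relStabilizer _).pow_mem hσ _)
  obtain ⟨a, b, hab, hb, hfab⟩ : ∃ a b, a < b ∧ b ≤ p + 1 ∧
      SameCell U ((σ ^ (k * a)) x) ((σ ^ (k * b)) x) := by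
    by_cases hxU : x ∈ U
    · obtain ⟨a, b, hab, hb, h⟩ := exists_lt_rel_of_forall_mem_clique
        (fun _ _ h => SameCell.symm h) (P := fun j : Fin p => {s i j})
        (fun _ y hy z hz => Or.inl (hy.trans hz.symm)) (f := fun c => (σ ^ (k * c)) x)
        fun c _ => (mem_range_of_mem_openPiece ht hα hs (hI c) ((hU c).2 hxU)).imp
          fun _ h => h.symm
      exact ⟨a, b, hab, by simp at hb; omega, h⟩
    · obtain ⟨a, b, hab, hb, h⟩ := exists_lt_rel_of_forall_mem_clique
        (fun _ _ h => SameCell.symm h) (P := subPiece N t α s i)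
        (fun j _ hy _ hz => sameCell_of_ordConnected (subPiece_ordConnected i j)
          (disjoint_subPiece ht hα hs hs_mono i j) hy hz) (f := fun c => (σ ^ (k * c)) x)
        fun c _ => exists_mem_subPiece hs_mono (hI c)
          fun h => hxU ((hU c).1 (Or.inr (Set.mem_iUnion.2 ⟨i, h⟩)))
      exact ⟨a, b, hab, by simpa using hb, h⟩
  refine ⟨b - a, by omega, by omega, ((relStabilizer _).pow_mem hσ (k * a) x _).1 ?_⟩
  rwa [← Equiv.Perm.mul_apply, ← pow_add, ← mul_add, Nat.add_sub_cancel' hab.le]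

lemma exists_isLeast_sameCell_pow (ht : StrictMono t) (hk : 0 < k) (hαN : ∀ i, α i ≤ N)
    (hα : Function.Injective α) (hs : ∀ i j, s i j ∈ openPiece N t (α i))
    (hs_mono : ∀ i, StrictMono (s i)) (hCk : ∀ i, openPiece N t (α i) ⊆ Ck N t σ k)
    (hinvT : AlgInvariant (pcAlgOn (Set.range t)) σ)
    (hinvT' : AlgInvariant (pcAlgOn (Set.range t)) σ.symm)
    (hinvU : AlgInvariant (pcAlgOn (Set.range t ∪ ⋃ i, Set.range (s i))) σ)
    (hinvU' : AlgInvariant (pcAlgOn (Set.range t ∪ ⋃ i, Set.range (s i))) σ.symm)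
    (hx : x ∈ openPiece N t (α i)) :
    ∃ l, 1 ≤ l ∧ l ≤ p + 1 ∧ IsLeast {j : ℕ | 0 < j ∧
      SameCell (Set.range t ∪ ⋃ i, Set.range (s i)) x ((σ ^ j) x)} (k * l) := by
  classical
  obtain ⟨c, hc0, hcp, hc⟩ :=
    exists_sameCell_pow_mul ht hαN hα hs hs_mono hCk hinvT hinvT' hinvU hinvU' hx
  have hex : ∃ j, 0 < j ∧ SameCell (Set.range t ∪ ⋃ i, Set.range (s i)) x ((σ ^ j) x) :=
    ⟨k * c, Nat.mul_pos hk hc0, hc⟩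
  obtain ⟨⟨hr0, hr⟩, -⟩ := Nat.isLeast_find hex
  obtain ⟨l, hl⟩ : k ∣ Nat.find hex := by
    have hrI := (sameCell_range_iff ht hx).1 (hr.mono Set.subset_union_left)
    rw [← zpow_natCast, zpow_mem_openPiece_iff ht hαN hCk hinvT hinvT' hx] at hrI
    exact_mod_cast hrI
  have hlc : k * l ≤ k * c := hl ▸ Nat.find_min' hex ⟨Nat.mul_pos hk hc0, hc⟩
  refine ⟨l, Nat.pos_of_ne_zero ?_, (Nat.le_of_mul_le_mul_left hlc hk).trans hcp,
    hl ▸ Nat.isLeast_find hex⟩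
  rintro rfl
  omega

lemma mem_Ctil_iff (ht : StrictMono t) (hα : Function.Injective α)
    (hs : ∀ i j, s i j ∈ openPiece N t (α i)) (hs_mono : ∀ i, StrictMono (s i))
    (hx : x ∈ openPiece N t (α i)) {r : ℕ} :
    x ∈ Ctil N t σ α s r ↔ IsLeast {j : ℕ | 0 < j ∧
      SameCell (Set.range t ∪ ⋃ i, Set.range (s i)) x ((σ ^ j) x)} r := by
  simp only [Ctil, Set.mem_ofPred_eq, exists_mem_cyclePieces_iff ht hα hs hs_mono hx]
  exact and_iff_right (Set.mem_iUnion.2 ⟨i, hx⟩)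

end Cycle

section Separation

variable {N : ℕ} {t : Fin N → ℝ} {σ : Equiv.Perm ℝ} {k p : ℕ} {α : Fin k → ℕ}
  {s : Fin k → Fin p → ℝ} {x y : ℝ}

lemma exists_mem_openPiece_of_sameCell (ht : StrictMono t)
    (hs : ∀ i j, s i j ∈ openPiece N t (α i)) (hT : SameCell (Set.range t) x y)
    (hU : ¬SameCell (Set.range t ∪ ⋃ i, Set.range (s i)) x y) :
    ∃ i, x ∈ openPiece N t (α i) := by
  rcases hT with rfl | hT
  · exact absurd (SameCell.refl _ _) hU
  obtain ⟨u, hu, hut | hus⟩ := Set.not_disjoint_iff.1 fun h => hU (Or.inr h)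
  · exact absurd hut (Set.disjoint_left.1 hT hu)
  obtain ⟨i, j, rfl⟩ := Set.mem_iUnion.1 hus
  exact ⟨i, (sameCell_range_iff ht (hs i j)).1
    (Or.inr (hT.mono_left (Set.uIcc_subset_uIcc_iff_mem.2 ⟨hu, Set.left_mem_uIcc⟩)))⟩

lemma mem_sep_refined_iff (ht : StrictMono t) (hk : 0 < k) (hαN : ∀ i, α i ≤ N)
    (hα : Function.Injective α) (hs : ∀ i j, s i j ∈ openPiece N t (α i))
    (hs_mono : ∀ i, StrictMono (s i)) (hCk : ∀ i, openPiece N t (α i) ⊆ Ck N t σ k)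
    (hinvT : AlgInvariant (pcAlgOn (Set.range t)) σ)
    (hinvT' : AlgInvariant (pcAlgOn (Set.range t)) σ.symm)
    (hinvU : AlgInvariant (pcAlgOn (Set.range t ∪ ⋃ i, Set.range (s i))) σ)
    (hinvU' : AlgInvariant (pcAlgOn (Set.range t ∪ ⋃ i, Set.range (s i))) σ.symm)
    (x : ℝ) (n : ℤ) :
    x ∈ Sep (pcAlgOn (Set.range t ∪ ⋃ i, Set.range (s i))) σ n ↔
      x ∈ Sep (pcAlgOn (Set.range t)) σ n ∨ ((k : ℤ) ∣ n ∧
        ∃ l, (1 ≤ l ∧ l ≤ p + 1 ∧ ¬(l : ℤ) ∣ n / k) ∧ x ∈ Ctil N t σ α s (k * l)) := by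
  rw [mem_sep_pcAlgOn_iff, mem_sep_pcAlgOn_iff]
  by_cases hx : ∃ i, x ∈ openPiece N t (α i)
  · obtain ⟨i, hx⟩ := hx
    obtain ⟨l, hl1, hlp, hl⟩ :=
      exists_isLeast_sameCell_pow ht hk hαN hα hs hs_mono hCk hinvT hinvT' hinvU hinvU' hx
    have hC : ∀ l', x ∈ Ctil N t σ α s (k * l') ↔ l' = l := fun l' => by
      rw [mem_Ctil_iff ht hα hs hs_mono hx]
      exact ⟨fun h => Nat.eq_of_mul_eq_mul_left hk (h.unique hl), by rintro rfl; exact hl⟩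
    rw [rel_zpow_iff_dvd (sameCell_equivalence _) (mem_relStabilizer_of_algInvariant hinvU hinvU')
      hl, sameCell_range_iff ht hx, zpow_mem_openPiece_iff ht hαN hCk hinvT hinvT' hx,
      dvd_neg, dvd_neg]
    simp only [hC, exists_eq_right, hl1, hlp, true_and]
    by_cases hkn : (k : ℤ) ∣ n
    · rw [Int.dvd_div_iff_mul_dvd hkn]
      push_cast
      tauto
    · have : ¬((k * l : ℕ) : ℤ) ∣ n := fun h =>
        hkn ((Int.natCast_dvd_natCast.2 (dvd_mul_right k l)).trans h)
      tauto
  · push Not at hx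
    have hC : ∀ l, x ∉ Ctil N t σ α s l := fun l h => by
      obtain ⟨i, hi⟩ := Set.mem_iUnion.1 h.1
      exact hx i hi
    simp only [hC, and_false, exists_false, or_false]
    exact ⟨fun hU hT => hx _ (exists_mem_openPiece_of_sameCell ht hs hT hU).choose_spec,
      fun hT hU => hT (hU.mono Set.subset_union_left)⟩

end Separation

section Commutant

variable {X : Type*} {σ : Equiv.Perm X}

lemma cmul_single_zero_right_apply (f : ℤ →₀ (X → ℂ)) (a : X → ℂ) (n : ℤ) :
    cmul σ f (Finsupp.single 0 a) n = fun x => f n x * a ((σ ^ n)⁻¹ x) := by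
  classical
  have hsum : cmul σ f (Finsupp.single 0 a) =
      f.sum fun m b => Finsupp.single m fun x => b x * a ((σ ^ m)⁻¹ x) := by
    refine Finsupp.sum_congr fun m _ => ?_
    rw [Finsupp.sum_single_index] <;> simp [← Pi.zero_def]
  rw [hsum, Finsupp.sum_single_apply f (fun m => by simp [← Pi.zero_def]) n]

lemma cmul_single_zero_left_apply (f : ℤ →₀ (X → ℂ)) (a : X → ℂ) (n : ℤ) :
    cmul σ (Finsupp.single 0 a) f n = fun x => a x * f n x := by
  classical
  have hsum : cmul σ (Finsupp.single 0 a) f =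
      f.sum fun m b => Finsupp.single m fun x => a x * b x := by
    rw [cmul, Finsupp.sum_single_index] <;> simp [← Pi.zero_def]
  rw [hsum, Finsupp.sum_single_apply f (fun m => by simp [← Pi.zero_def]) n]

lemma mem_commutant_iff {A B : Subalgebra ℂ (X → ℂ)} {f : ℤ →₀ (X → ℂ)} :
    f ∈ commutant A B σ ↔ InCrossed B f ∧ ∀ n, ∀ x ∈ Sep A σ n, f n x = 0 := by
  have hcomm : ∀ a, cmul σ f (Finsupp.single 0 a) = cmul σ (Finsupp.single 0 a) f ↔
      ∀ n x, f n x * a ((σ ^ n)⁻¹ x) = a x * f n x := fun a => by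
    simp only [Finsupp.ext_iff, funext_iff, cmul_single_zero_right_apply,
      cmul_single_zero_left_apply]
  refine and_congr_right fun _ => ⟨fun h n x ⟨a, ha, hne⟩ => ?_, fun h a ha => ?_⟩
  · have hfa := (hcomm a).1 (h a ha) n x
    have : f n x * (a x - a ((σ ^ n)⁻¹ x)) = 0 := by rw [mul_sub, hfa]; ring
    exact (mul_eq_zero.1 this).resolve_right (sub_ne_zero.2 hne)
  · refine (hcomm a).2 fun n x => ?_
    by_cases hx : x ∈ Sep A σ n
    · simp [h n x hx]
    · rw [of_not_not (not_exists.1 hx a ∘ And.intro ha), mul_comm]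

lemma commutant_eq_sdiff {A A' B : Subalgebra ℂ (X → ℂ)} {D : ℤ → Set X}
    (hD : ∀ n, Sep A' σ n = Sep A σ n ∪ D n) :
    commutant A' B σ = commutant A B σ \ {f | ∃ n, ∃ x ∈ D n, f n x ≠ 0} := by
  ext f
  simp only [Set.mem_sdiff, mem_commutant_iff, hD, Set.mem_union, Set.mem_ofPred_eq]
  constructor
  · rintro ⟨hB, h⟩
    exact ⟨⟨hB, fun n x hx => h n x (Or.inl hx)⟩, fun ⟨n, x, hx, hfx⟩ => hfx (h n x (Or.inr hx))⟩
  · rintro ⟨⟨hB, h⟩, h'⟩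
    exact ⟨hB, fun n x hx => hx.elim (h n x) fun hx => by_contra fun hfx => h' ⟨n, x, hx, hfx⟩⟩

end Commutant

theorem statement10_general (N : ℕ) (t : Fin N → ℝ) (ht : StrictMono t)
    (σ : Equiv.Perm ℝ) (k p : ℕ) (α : Fin k → ℕ) (s : Fin k → Fin p → ℝ)
    (hsetup : CyclicSetup N t σ α s) :
    (∀ n : ℤ,
      (¬((k : ℤ) ∣ n) →
        Sep (pcAlgOn (Set.range t ∪ ⋃ i, Set.range (s i))) σ n =
          Sep (pcAlgOn (Set.range t)) σ n) ∧
      ((k : ℤ) ∣ n →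
        Sep (pcAlgOn (Set.range t ∪ ⋃ i, Set.range (s i))) σ n =
          Sep (pcAlgOn (Set.range t)) σ n ∪
            ⋃ (l : ℕ) (_ : 1 ≤ l ∧ l ≤ p + 1 ∧ ¬((l : ℤ) ∣ n / (k : ℤ))),
              Ctil N t σ α s (k * l))) ∧
    commutant (pcAlgOn (Set.range t ∪ ⋃ i, Set.range (s i)))
        (pcAlgOn (Set.range t ∪ ⋃ i, Set.range (s i))) σ =
      commutant (pcAlgOn (Set.range t))
          (pcAlgOn (Set.range t ∪ ⋃ i, Set.range (s i))) σ \
        {f : ℤ →₀ (ℝ → ℂ) | ∃ n : ℤ, ∃ l : ℕ, 1 ≤ l ∧ l ≤ p + 1 ∧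
          (k : ℤ) ∣ n ∧ ¬((l : ℤ) ∣ n / (k : ℤ)) ∧
          ¬(∀ x ∈ Ctil N t σ α s (k * l), f n x = 0)} := by
  obtain ⟨hk, hαN, hα, hs, hs_mono, -, hCk, hinvT, hinvT', hinvU, hinvU'⟩ := hsetup
  have hsep := mem_sep_refined_iff ht hk hαN hα hs hs_mono hCk hinvT hinvT' hinvU hinvU'
  refine ⟨fun n => ⟨fun hkn => ?_, fun hkn => ?_⟩, ?_⟩
  · ext x
    simp [hsep, hkn]
  · ext x
    simp [hsep, hkn]
  · rw [commutant_eq_sdiff (D := fun n => {x | (k : ℤ) ∣ n ∧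
      ∃ l, (1 ≤ l ∧ l ≤ p + 1 ∧ ¬(l : ℤ) ∣ n / k) ∧ x ∈ Ctil N t σ α s (k * l)})
      fun n => Set.ext fun x => hsep x n]
    congr 1
    ext f
    simp only [Set.mem_ofPred_eq, not_forall, exists_prop]
    exact ⟨fun ⟨n, x, ⟨hkn, l, ⟨hl1, hlp, hln⟩, hx⟩, hfx⟩ => ⟨n, l, hl1, hlp, hkn, hln, x, hx, hfx⟩,
      fun ⟨n, l, hl1, hlp, hkn, hln, x, hx, hfx⟩ => ⟨n, x, ⟨hkn, l, ⟨hl1, hlp, hln⟩, hx⟩, hfx⟩⟩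

/-- in the cyclic setup (with `C_k` consisting of the intervals of the cycle),
`Sepⁿ_{𝒜_S}(ℝ) = Sepⁿ_𝒜(ℝ)` if `k ∤ n`, and
`Sepⁿ_{𝒜_S}(ℝ) = Sepⁿ_𝒜(ℝ) ∪ ⋃_{1 ≤ l ≤ p+1, l ∤ n/k} C̃_{k·l}` if `k ∣ n`; consequently
`𝒜_S' = 𝒜' \ {Σ fₙδⁿ : fₙ ≢ 0 on C̃_{k·l} for some n, l with k ∣ n and l ∤ n/k}`, the
commutants being taken in `𝒜_S ⋊_σ̃ ℤ`. -/
theorem statement10 (N : ℕ) (t : Fin N → ℝ) (ht : StrictMono t)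
    (σ : Equiv.Perm ℝ) (k p : ℕ) (α : Fin k → ℕ) (s : Fin k → Fin p → ℝ)
    (hsetup : CyclicSetup N t σ α s)
    (hCeq : Ck N t σ k = ⋃ i, openPiece N t (α i)) :
    (∀ n : ℤ,
      (¬((k : ℤ) ∣ n) →
        Sep (pcAlgOn (Set.range t ∪ ⋃ i, Set.range (s i))) σ n =
          Sep (pcAlgOn (Set.range t)) σ n) ∧
      ((k : ℤ) ∣ n →
        Sep (pcAlgOn (Set.range t ∪ ⋃ i, Set.range (s i))) σ n =
          Sep (pcAlgOn (Set.range t)) σ n ∪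
            ⋃ (l : ℕ) (_ : 1 ≤ l ∧ l ≤ p + 1 ∧ ¬((l : ℤ) ∣ n / (k : ℤ))),
              Ctil N t σ α s (k * l))) ∧
    commutant (pcAlgOn (Set.range t ∪ ⋃ i, Set.range (s i)))
        (pcAlgOn (Set.range t ∪ ⋃ i, Set.range (s i))) σ =
      commutant (pcAlgOn (Set.range t))
          (pcAlgOn (Set.range t ∪ ⋃ i, Set.range (s i))) σ \
        {f : ℤ →₀ (ℝ → ℂ) | ∃ n : ℤ, ∃ l : ℕ, 1 ≤ l ∧ l ≤ p + 1 ∧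
          (k : ℤ) ∣ n ∧ ¬((l : ℤ) ∣ n / (k : ℤ)) ∧
          ¬(∀ x ∈ Ctil N t σ α s (k * l), f n x = 0)} :=
  statement10_general N t ht σ k p α s hsetup

end PaperTRS
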